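/- The compositional inverse χ_{n,m}^{-1} of χ_{n,m} has algebraic degree (m−1)ℓ + 1. -/

import Mathlib

/-- Index `i + j` computed modulo `n`, for `i : Fin n` and `j : ℕ`. -/
def idx {n : ℕ} (i : Fin n) (j : ℕ) : Fin n :=
  ⟨(i.val + j) % n, Nat.mod_lt _ i.pos⟩

/-- The map `θ_{m,k} : F_2^n → F_2^n`; `θ_{m,0}` is the identity map, and for `k ≥ 1`,
`(θ_{m,k}(x))_i = x_{i+mk} · ∏_{1 ≤ j ≤ mk−1, m ∤ j} (x_{i+j} + 1)` (indices mod `n`). -/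
def theta (n m k : ℕ) : (Fin n → ZMod 2) → Fin n → ZMod 2 :=
  if k = 0 then id
  else fun x i =>
    x (idx i (m * k)) *
      ∏ j ∈ (Finset.Ico 1 (m * k)).filter (fun j => ¬ m ∣ j), (x (idx i j) + 1)

/-- The algebraic degree of a Boolean function: the least `d` such that the function is the
evaluation of a multivariate polynomial over `F_2` of total degree at most `d`. -/
noncomputable def algDeg {N : ℕ} (h : (Fin N → ZMod 2) → ZMod 2) : ℕ :=
  sInf {d | ∃ p : MvPolynomial (Fin N) (ZMod 2),
    p.totalDegree ≤ d ∧ ∀ x, MvPolynomial.eval x p = h x}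

/-- The algebraic degree of a vectorial map: the maximum of the algebraic degrees of its
coordinate functions. -/
noncomputable def mapDeg {N : ℕ} (F : (Fin N → ZMod 2) → Fin N → ZMod 2) : ℕ :=
  Finset.univ.sup fun i => algDeg fun x => F x i

/-!
Write `g(x, i) = ∏_{0<t<m} (x_{i+t} + 1)`. Splitting off the first block of indices gives the
recursion `θ_{m,k+1}(x)_i = g(x, i) · θ_{m,k}(x)_{i+m}`, and by induction on `k` this yields
`θ_{m,k} ∘ χ = θ_{m,k} + θ_{m,k+1}`: wherever `g(χ(x), i) ≠ g(x, i)`, some `θ_{m,1}(x)_{i+t}`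
with `0 < t < m` equals `1`, and that forces every `θ_{m,k}(x)_{i+m}` to vanish. Hence
`∑_{k ≤ ℓ} θ_{m,k} ∘ χ` telescopes to `id + θ_{m,ℓ+1} = id`, so `χ⁻¹ = ∑_{k ≤ ℓ} θ_{m,k}`, visibly
of degree at most `(m-1)ℓ + 1`.

For the lower bound let `T` be the `(m-1)ℓ + 1` variables of the leading monomial
`x_{i+mℓ} ∏_j x_{i+j}` of `θ_{m,ℓ}`. The `i`-th coordinate of `χ⁻¹` sums to `1` over the subcube
spanned by `T`, whereas by Chevalley–Warning, applied to `p · ∏_{v ∉ T} (x_v + 1)`, every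
polynomial `p` of degree `< |T|` sums to `0` there.
-/

open Finset MvPolynomial

lemma ZMod.mul_self_add_one_eq_zero (a : ZMod 2) : a * (a + 1) = 0 := by
  revert a; decide

lemma ZMod.add_one_ne_zero_iff (a : ZMod 2) : a + 1 ≠ 0 ↔ a = 0 := by
  revert a; decide

lemma mul_prod_add_one_eq_zero {α : Type*} [DecidableEq α] {s : Finset α} (f : α → ZMod 2)
    {a : α} (ha : a ∈ s) : f a * ∏ b ∈ s, (f b + 1) = 0 := by
  rw [← mul_prod_erase s _ ha, ← mul_assoc, ZMod.mul_self_add_one_eq_zero, zero_mul]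

lemma sum_mul_prod_erase_add_one {σ : Type*} [Fintype σ] [DecidableEq σ] (p : σ) :
    ∑ x : σ → ZMod 2, x p * ∏ v ∈ univ.erase p, (x v + 1) = 1 := by
  have hfactor : ∀ x : σ → ZMod 2, x p * ∏ v ∈ univ.erase p, (x v + 1)
      = ∏ v, (if v = p then x v else x v + 1) := fun x => by
    rw [← mul_prod_erase univ _ (mem_univ p), if_pos rfl]
    exact congrArg _ (prod_congr rfl fun v hv => (if_neg (ne_of_mem_erase hv)).symm)
  rw [Fintype.sum_congr _ _ hfactor,
    ← Fintype.prod_sum (fun v (a : ZMod 2) => if v = p then a else a + 1)]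
  refine prod_eq_one fun v _ => ?_
  split_ifs <;> decide

lemma totalDegree_prod_X_add_one_le {σ ι R : Type*} [CommSemiring R] [Nontrivial R]
    (s : Finset ι) (g : ι → σ) :
    (∏ j ∈ s, (X (g j) + 1 : MvPolynomial σ R)).totalDegree ≤ s.card := by
  refine (totalDegree_finsetProd _ _).trans ?_
  rw [card_eq_sum_ones]
  refine sum_le_sum fun j _ => (totalDegree_add _ _).trans ?_
  simp only [totalDegree_one]
  exact max_le (totalDegree_X _).le (Nat.zero_le _)

lemma card_le_totalDegree_of_sum_ne_zero {σ : Type*} [Fintype σ] [DecidableEq σ]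
    (p : MvPolynomial σ (ZMod 2)) (T : Finset σ)
    (h : ∑ x, eval x p * ∏ v ∈ Tᶜ, (x v + 1) ≠ 0) : T.card ≤ p.totalDegree := by
  by_contra! hlt
  set f := p * ∏ v ∈ Tᶜ, (X v + 1)
  have hcompl : (∏ v ∈ Tᶜ, (X v + 1 : MvPolynomial σ (ZMod 2))).totalDegree ≤ Tᶜ.card :=
    totalDegree_prod_X_add_one_le Tᶜ (fun v => v)
  have hdeg : f.totalDegree < (Fintype.card (ZMod 2) - 1) * Fintype.card σ := by
    calc f.totalDegree ≤ p.totalDegree + Tᶜ.card :=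
          (totalDegree_mul _ _).trans (Nat.add_le_add_left hcompl _)
      _ < T.card + Tᶜ.card := Nat.add_lt_add_right hlt _
      _ = (Fintype.card (ZMod 2) - 1) * Fintype.card σ := by
          rw [ZMod.card, add_comm, card_compl_add_card]; norm_num
  apply h
  simpa [f] using sum_eval_eq_zero f hdeg

section Index

variable {n : ℕ} (i : Fin n)

lemma idx_zero : idx i 0 = i :=
  Fin.ext (by simp [idx, Nat.mod_eq_of_lt i.isLt])

lemma idx_idx (a b : ℕ) : idx (idx i a) b = idx i (a + b) :=
  Fin.ext (by simp [idx, Nat.mod_add_mod, Nat.add_assoc])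

lemma idx_add_left_self (a : ℕ) : idx i (n + a) = idx i a :=
  Fin.ext (by simp [idx, Nat.add_left_comm _ n, Nat.add_mod_left])

lemma idx_injOn : Set.InjOn (idx i) (Set.Iio n) := fun a ha b hb hab => by
  have h : (i + a : ℕ) ≡ i + b [MOD n] := congrArg Fin.val hab
  have h' := Nat.ModEq.add_left_cancel' _ h
  rwa [Nat.ModEq, Nat.mod_eq_of_lt ha, Nat.mod_eq_of_lt hb] at h'

end Index

def nonMultiples (m k : ℕ) : Finset ℕ := (Ico 1 (m * k)).filter (fun j => ¬ m ∣ j)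

lemma mem_nonMultiples {m k j : ℕ} : j ∈ nonMultiples m k ↔ (1 ≤ j ∧ j < m * k) ∧ ¬ m ∣ j := by
  simp [nonMultiples]

lemma nonMultiples_succ (m k : ℕ) :
    nonMultiples m (k + 1) = Ico 1 m ∪ (nonMultiples m k).map (addLeftEmbedding m) := by
  ext j
  simp only [mem_union, mem_Ico, mem_map, addLeftEmbedding_apply, mem_nonMultiples, Nat.mul_succ]
  constructor
  · rintro ⟨⟨hj1, hjk⟩, hdvd⟩
    rcases lt_or_ge j m with hjm | hjm
    · exact Or.inl ⟨hj1, hjm⟩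
    · obtain ⟨a, rfl⟩ := Nat.exists_eq_add_of_le hjm
      rw [Nat.dvd_add_right (dvd_refl m)] at hdvd
      have ha : a ≠ 0 := by rintro rfl; exact hdvd (dvd_zero m)
      exact Or.inr ⟨a, ⟨⟨by omega, by omega⟩, hdvd⟩, rfl⟩
  · rintro (⟨hj1, hjm⟩ | ⟨a, ⟨⟨ha1, hak⟩, hdvd⟩, rfl⟩)
    · exact ⟨⟨hj1, by omega⟩, fun h => by have := Nat.eq_zero_of_dvd_of_lt h hjm; omega⟩
    · exact ⟨⟨by omega, by omega⟩, by rwa [Nat.dvd_add_right (dvd_refl m)]⟩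

lemma disjoint_Ico_map_nonMultiples (m k : ℕ) :
    Disjoint (Ico 1 m) ((nonMultiples m k).map (addLeftEmbedding m)) := by
  simp only [disjoint_left, mem_Ico, mem_map, addLeftEmbedding_apply]
  rintro _ ⟨_, hjm⟩ ⟨a, _, rfl⟩
  omega

lemma card_nonMultiples (m : ℕ) : ∀ k, (nonMultiples m k).card = (m - 1) * k
  | 0 => by simp [nonMultiples]
  | k + 1 => by
    rw [nonMultiples_succ, card_union_of_disjoint (disjoint_Ico_map_nonMultiples m k), card_map,
      card_nonMultiples m k, Nat.card_Ico]
    ring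

def gap {n : ℕ} (m : ℕ) (x : Fin n → ZMod 2) (i : Fin n) : ZMod 2 :=
  ∏ t ∈ Ico 1 m, (x (idx i t) + 1)

section Theta

variable {n m : ℕ} (x : Fin n → ZMod 2) (i : Fin n)

lemma theta_apply (k : ℕ) :
    theta n m k x i = x (idx i (m * k)) * ∏ j ∈ nonMultiples m k, (x (idx i j) + 1) := by
  rcases eq_or_ne k 0 with rfl | hk
  · simp [theta, nonMultiples, idx_zero]
  · simp [theta, hk, nonMultiples]

lemma theta_zero_apply : theta n m 0 x i = x i := rfl

lemma theta_succ_apply (k : ℕ) :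
    theta n m (k + 1) x i = gap m x i * theta n m k x (idx i m) := by
  rw [theta_apply, theta_apply, nonMultiples_succ, prod_union (disjoint_Ico_map_nonMultiples m k),
    prod_map, gap, idx_idx]
  simp only [addLeftEmbedding_apply, idx_idx, Nat.mul_succ, Nat.add_comm (m * k) m]
  ring

lemma chi_apply : (theta n m 0 + theta n m 1) x i = x i + theta n m 1 x i := rfl

/-- A `1` of `θ_{m,1}(x)` at `j` forces `x_{j+m} = 1` and `x_{j+u} = 0` for `0 < u < m`, which
kills every `θ_{m,k}(x)` at the positions `j + u`. -/
lemma theta_idx_eq_zero_of_theta_one_ne_zero {j : Fin n} (hj : theta n m 1 x j ≠ 0) {u : ℕ}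
    (hu : u ∈ Ico 1 m) (k : ℕ) : theta n m k x (idx j u) = 0 := by
  rw [theta_succ_apply, theta_zero_apply, gap] at hj
  obtain ⟨hgap, hxm⟩ := mul_ne_zero_iff.mp hj
  rw [prod_ne_zero_iff] at hgap
  cases k with
  | zero => exact (ZMod.add_one_ne_zero_iff _).mp (hgap u hu)
  | succ k =>
    have hmu : m - u ∈ Ico 1 m := by simp only [mem_Ico] at hu ⊢; omega
    rw [theta_succ_apply, gap, prod_eq_zero hmu, zero_mul]
    rw [idx_idx, Nat.add_sub_cancel' (mem_Ico.mp hu).2.le, Fin.eq_one_of_ne_zero _ hxm]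
    rfl

lemma theta_chi_apply (k : ℕ) :
    theta n m k ((theta n m 0 + theta n m 1) x) i = theta n m k x i + theta n m (k + 1) x i := by
  induction k generalizing i with
  | zero => rfl
  | succ k ih =>
    rw [theta_succ_apply _ i k, ih, theta_succ_apply x i k, theta_succ_apply x i (k + 1)]
    by_cases hgap : gap m ((theta n m 0 + theta n m 1) x) i = gap m x i
    · rw [hgap]; ring
    obtain ⟨t, ht, hne⟩ : ∃ t ∈ Ico 1 m, (theta n m 0 + theta n m 1) x (idx i t) ≠ x (idx i t) := by
      by_contra! h
      exact hgap (prod_congr rfl fun t ht => by rw [h t ht])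
    have h1 : theta n m 1 x (idx i t) ≠ 0 := by rwa [chi_apply, ne_eq, add_eq_left] at hne
    have hmt : m - t ∈ Ico 1 m := by simp only [mem_Ico] at ht ⊢; omega
    have hidx : idx (idx i t) (m - t) = idx i m := by
      rw [idx_idx, Nat.add_sub_cancel' (mem_Ico.mp ht).2.le]
    rw [← hidx, theta_idx_eq_zero_of_theta_one_ne_zero x h1 hmt,
      theta_idx_eq_zero_of_theta_one_ne_zero x h1 hmt]
    ring

lemma sum_theta_chi_apply (L : ℕ) :
    ∑ k ∈ range L, theta n m k ((theta n m 0 + theta n m 1) x) i = x i + theta n m L x i := by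
  induction L with
  | zero => simp [theta_zero_apply, CharTwo.add_self_eq_zero]
  | succ L ih =>
    rw [sum_range_succ, ih, theta_chi_apply, add_assoc, ← add_assoc (theta n m L x i),
      CharTwo.add_self_eq_zero, zero_add]

end Theta

lemma mul_div_lt_of_not_dvd {n m : ℕ} (hmn : ¬ m ∣ n) : m * (n / m) < n :=
  (Nat.mul_div_le n m).lt_of_ne fun h => hmn ⟨n / m, h.symm⟩

/-- With `r = n % m`, the index `m(ℓ+1) ≡ m - r` lies in `nonMultiples m (ℓ+1)`, so the leading
variable of `θ_{m,ℓ+1}` meets its own negation. -/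
lemma theta_div_add_one_eq_zero {n m : ℕ} (hm : 0 < m) (hmn : ¬ m ∣ n) (x : Fin n → ZMod 2)
    (i : Fin n) : theta n m (n / m + 1) x i = 0 := by
  have hr : 0 < n % m := Nat.pos_of_ne_zero fun h => hmn (Nat.dvd_of_mod_eq_zero h)
  have hrm : n % m < m := Nat.mod_lt n hm
  have hdiv : m * (n / m) + n % m = n := Nat.div_add_mod n m
  have hmem : m - n % m ∈ nonMultiples m (n / m + 1) := by
    refine mem_nonMultiples.mpr ⟨⟨by omega, by rw [Nat.mul_succ]; omega⟩, fun h => ?_⟩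
    have := Nat.eq_zero_of_dvd_of_lt h (by omega)
    omega
  have hidx : idx i (m * (n / m + 1)) = idx i (m - n % m) := by
    rw [← idx_add_left_self i (m - n % m)]; congr 1; rw [Nat.mul_succ]; omega
  rw [theta_apply, hidx]
  exact mul_prod_add_one_eq_zero (fun j => x (idx i j)) hmem

noncomputable def chiInv (n m : ℕ) : (Fin n → ZMod 2) → Fin n → ZMod 2 :=
  ∑ k ∈ range (n / m + 1), theta n m k

lemma chiInv_apply (n m : ℕ) (x : Fin n → ZMod 2) (i : Fin n) :
    chiInv n m x i = ∑ k ∈ range (n / m + 1), theta n m k x i := by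
  simp only [chiInv, Finset.sum_apply]

lemma leftInverse_chiInv {n m : ℕ} (hm : 0 < m) (hmn : ¬ m ∣ n) :
    Function.LeftInverse (chiInv n m) (theta n m 0 + theta n m 1) := fun x => by
  ext i
  rw [chiInv_apply, sum_theta_chi_apply, theta_div_add_one_eq_zero hm hmn, add_zero]

noncomputable def thetaPoly (n m k : ℕ) (i : Fin n) : MvPolynomial (Fin n) (ZMod 2) :=
  X (idx i (m * k)) * ∏ j ∈ nonMultiples m k, (X (idx i j) + 1)

lemma eval_thetaPoly {n : ℕ} (m k : ℕ) (x : Fin n → ZMod 2) (i : Fin n) :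
    eval x (thetaPoly n m k i) = theta n m k x i := by
  simp [thetaPoly, theta_apply]

lemma totalDegree_thetaPoly_le {n : ℕ} (m k : ℕ) (i : Fin n) :
    (thetaPoly n m k i).totalDegree ≤ (m - 1) * k + 1 := by
  rw [thetaPoly, ← card_nonMultiples, add_comm]
  refine (totalDegree_mul _ _).trans ?_
  rw [totalDegree_X]
  exact Nat.add_le_add_left (totalDegree_prod_X_add_one_le _ _) 1

def thetaVars {n : ℕ} (m k : ℕ) (i : Fin n) : Finset (Fin n) :=
  insert (idx i (m * k)) ((nonMultiples m k).image (idx i))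

section ThetaVars

variable {n m k : ℕ} (hk : m * k < n) (i : Fin n)
include hk

lemma injOn_idx_nonMultiples : Set.InjOn (idx i) (nonMultiples m k) := fun _ ha _ hb =>
  idx_injOn i ((mem_nonMultiples.mp ha).1.2.trans hk) ((mem_nonMultiples.mp hb).1.2.trans hk)

lemma idx_notMem_image_nonMultiples {k' : ℕ} (hk' : k' ≤ k) :
    idx i (m * k') ∉ (nonMultiples m k).image (idx i) := by
  simp only [mem_image, not_exists, not_and]
  intro j hj hji
  have hjk := (mem_nonMultiples.mp hj).1.2
  have hmk' : m * k' < n := (Nat.mul_le_mul_left m hk').trans_lt hk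
  rw [idx_injOn i (show j < n by omega) hmk' hji] at hj
  exact (mem_nonMultiples.mp hj).2 (dvd_mul_right m k')

lemma card_thetaVars : (thetaVars m k i).card = (m - 1) * k + 1 := by
  rw [thetaVars, card_insert_of_notMem (idx_notMem_image_nonMultiples hk i le_rfl),
    card_image_of_injOn (injOn_idx_nonMultiples hk i), card_nonMultiples]

lemma sum_theta_mul_prod_compl_thetaVars :
    ∑ x : Fin n → ZMod 2, theta n m k x i * ∏ v ∈ (thetaVars m k i)ᶜ, (x v + 1) = 1 := by
  have hsplit : univ.erase (idx i (m * k))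
      = (nonMultiples m k).image (idx i) ∪ (thetaVars m k i)ᶜ := by
    have hp := idx_notMem_image_nonMultiples hk i le_rfl
    ext v
    by_cases hv : v = idx i (m * k)
    · subst hv; simp [thetaVars, hp]
    · simp only [thetaVars, mem_erase, mem_union, mem_compl, mem_insert, hv, false_or, ne_eq,
        not_false_eq_true, mem_univ, and_self, true_iff]
      exact em _
  have hdisj : Disjoint ((nonMultiples m k).image (idx i)) (thetaVars m k i)ᶜ :=
    disjoint_left.mpr fun v hv hv' => mem_compl.mp hv' (mem_insert_of_mem hv)
  refine Eq.trans (Fintype.sum_congr _ _ fun x => ?_) (sum_mul_prod_erase_add_one (idx i (m * k)))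
  rw [hsplit, prod_union hdisj, theta_apply, ← mul_assoc,
    prod_image (f := fun v => x v + 1) (injOn_idx_nonMultiples hk i)]

lemma theta_mul_prod_compl_thetaVars_of_lt (hm : 0 < m) {k' : ℕ} (hk' : k' < k)
    (x : Fin n → ZMod 2) : theta n m k' x i * ∏ v ∈ (thetaVars m k i)ᶜ, (x v + 1) = 0 := by
  have hmem : idx i (m * k') ∈ (thetaVars m k i)ᶜ := by
    rw [mem_compl, thetaVars, mem_insert, not_or]
    refine ⟨fun h => ?_, idx_notMem_image_nonMultiples hk i hk'.le⟩
    have := idx_injOn i ((Nat.mul_le_mul_left m hk'.le).trans_lt hk) hk h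
    exact hk'.ne (Nat.eq_of_mul_eq_mul_left hm this)
  rw [theta_apply, mul_right_comm, mul_prod_add_one_eq_zero x hmem, zero_mul]

end ThetaVars

lemma sum_chiInv_mul_prod_compl_thetaVars {n m : ℕ} (hm : 0 < m) (hmn : ¬ m ∣ n) (i : Fin n) :
    ∑ x, chiInv n m x i * ∏ v ∈ (thetaVars m (n / m) i)ᶜ, (x v + 1) = 1 := by
  have hk := mul_div_lt_of_not_dvd hmn
  simp_rw [chiInv_apply, sum_mul]
  rw [sum_comm, sum_range_succ, sum_theta_mul_prod_compl_thetaVars hk, add_eq_right]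
  refine sum_eq_zero fun k hkl => sum_eq_zero fun x _ => ?_
  exact theta_mul_prod_compl_thetaVars_of_lt hk i hm (mem_range.mp hkl) x

lemma algDeg_chiInv_apply {n m : ℕ} (hm : 0 < m) (hmn : ¬ m ∣ n) (i : Fin n) :
    algDeg (fun x => chiInv n m x i) = (m - 1) * (n / m) + 1 := by
  refine IsLeast.csInf_eq ⟨⟨∑ k ∈ range (n / m + 1), thetaPoly n m k i, ?_, fun x => ?_⟩, ?_⟩
  · refine (totalDegree_finsetSum _ _).trans (Finset.sup_le fun k hk => ?_)
    refine (totalDegree_thetaPoly_le m k i).trans ?_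
    have := mem_range.mp hk
    gcongr
    omega
  · simp only [map_sum, eval_thetaPoly, chiInv_apply]
  · rintro d ⟨p, hpd, hp⟩
    rw [← card_thetaVars (mul_div_lt_of_not_dvd hmn) i]
    refine (card_le_totalDegree_of_sum_ne_zero p _ ?_).trans hpd
    simp only [hp, sum_chiInv_mul_prod_compl_thetaVars hm hmn i, ne_eq, one_ne_zero,
      not_false_eq_true]

lemma mapDeg_chiInv {n m : ℕ} (hm : 0 < m) (hmn : ¬ m ∣ n) :
    mapDeg (chiInv n m) = (m - 1) * (n / m) + 1 := by
  have : NeZero n := ⟨fun h => hmn (h ▸ dvd_zero m)⟩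
  simp only [mapDeg, algDeg_chiInv_apply hm hmn]
  exact sup_const univ_nonempty _

theorem stmt15_general (n m : ℕ) (hm : 2 ≤ m) (hmn : ¬ m ∣ n) :
    (∃ g : (Fin n → ZMod 2) → Fin n → ZMod 2,
      (theta n m 0 + theta n m 1) ∘ g = id ∧ g ∘ (theta n m 0 + theta n m 1) = id) ∧
    (∀ g : (Fin n → ZMod 2) → Fin n → ZMod 2,
      (theta n m 0 + theta n m 1) ∘ g = id → g ∘ (theta n m 0 + theta n m 1) = id →
        mapDeg g = (m - 1) * (n / m) + 1) := by
  have hm0 : 0 < m := by omega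
  have hleft := leftInverse_chiInv hm0 hmn
  have hright : Function.RightInverse (chiInv n m) (theta n m 0 + theta n m 1) :=
    hleft.rightInverse_of_card_le le_rfl
  refine ⟨⟨chiInv n m, hright.comp_eq_id, hleft.comp_eq_id⟩, fun g _ hg => ?_⟩
  have hg' : g = chiInv n m := Function.LeftInverse.eq_rightInverse (congrFun hg) hright
  rw [hg', mapDeg_chiInv hm0 hmn]

theorem stmt15 (n m : ℕ) (hn : 1 ≤ n) (hm : 2 ≤ m) (hmn : ¬ m ∣ n) :
    (∃ g : (Fin n → ZMod 2) → Fin n → ZMod 2,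
      (theta n m 0 + theta n m 1) ∘ g = id ∧ g ∘ (theta n m 0 + theta n m 1) = id) ∧
    (∀ g : (Fin n → ZMod 2) → Fin n → ZMod 2,
      (theta n m 0 + theta n m 1) ∘ g = id → g ∘ (theta n m 0 + theta n m 1) = id →
        mapDeg g = (m - 1) * (n / m) + 1) :=
  stmt15_general n m hm hmn
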